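/- arXiv:1310.7331 — 2 statements merged into one kernel-verified Lean document; each statement's English description precedes it below -/
import Mathlib

section
/- Let E be a finite-dimensional real inner product space and let μ : E → ℝ be positively homogeneous and convex (superadditive). If 0 does not belong to C_μ, then the supremum sup { μ(φ) : φ ∈ E, ‖φ‖ = 1 } is attained, and it is attained at a unique unit vector φ₀; that is, there exists a unique φ₀ ∈ E with ‖φ₀‖ = 1 such that μ(φ) ≤ μ(φ₀) for all unit vectors φ. -/
/-!
A positively homogeneous superadditive `μ` is concave, hence continuous in finite dimension, so
it attains its maximum `M` on the compact unit sphere; homogeneity then gives `μ φ ≤ ‖φ‖ * M`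
everywhere. Since `0 ∉ C_μ`, some `μ φ₁` is positive, so `M > 0`. If two distinct unit vectors
`ψ, φ₀` both attain `M`, then `2 * M ≤ μ (ψ + φ₀) ≤ ‖ψ + φ₀‖ * M < 2 * M` by strict convexity
of the Euclidean norm.
-/

open RealInnerProductSpace

section Superadditive

variable {E : Type*} [NormedAddCommGroup E] [NormedSpace ℝ E] {μ : E → ℝ}

theorem map_zero_of_posHomogeneous (hhom : ∀ (φ : E) (t : ℝ), 0 ≤ t → μ (t • φ) = t * μ φ) :
    μ 0 = 0 := by
  simpa using hhom 0 0 le_rfl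

theorem concaveOn_univ_of_posHomogeneous_of_superadditive
    (hhom : ∀ (φ : E) (t : ℝ), 0 ≤ t → μ (t • φ) = t * μ φ)
    (hconv : ∀ φ ψ : E, μ φ + μ ψ ≤ μ (φ + ψ)) : ConcaveOn ℝ Set.univ μ := by
  refine ⟨convex_univ, fun x _ y _ a b ha hb _ => ?_⟩
  calc a • μ x + b • μ y = μ (a • x) + μ (b • y) := by
        simp only [smul_eq_mul, hhom _ _ ha, hhom _ _ hb]
    _ ≤ μ (a • x + b • y) := hconv _ _

theorem le_norm_mul_of_forall_norm_eq_one_le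
    (hhom : ∀ (φ : E) (t : ℝ), 0 ≤ t → μ (t • φ) = t * μ φ) {φ₀ : E}
    (hmax : ∀ φ : E, ‖φ‖ = 1 → μ φ ≤ μ φ₀) (φ : E) : μ φ ≤ ‖φ‖ * μ φ₀ := by
  rcases eq_or_ne φ 0 with rfl | hφ
  · simp [map_zero_of_posHomogeneous hhom]
  have hnorm : ‖φ‖ ≠ 0 := norm_ne_zero_iff.mpr hφ
  calc μ φ = ‖φ‖ * μ (‖φ‖⁻¹ • φ) := by
        rw [hhom _ _ (inv_nonneg.mpr (norm_nonneg φ)), mul_inv_cancel_left₀ hnorm]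
    _ ≤ ‖φ‖ * μ φ₀ := by
        gcongr
        exact hmax _ (by rw [norm_smul, norm_inv, norm_norm, inv_mul_cancel₀ hnorm])

theorem exists_norm_eq_one_forall_le [ProperSpace E] [Nontrivial E] (hμ : Continuous μ) :
    ∃ φ₀ : E, ‖φ₀‖ = 1 ∧ ∀ φ : E, ‖φ‖ = 1 → μ φ ≤ μ φ₀ := by
  obtain ⟨φ₀, hφ₀, hmax⟩ := (isCompact_sphere (0 : E) 1).exists_isMaxOn
    (NormedSpace.sphere_nonempty.mpr zero_le_one) hμ.continuousOn
  exact ⟨φ₀, by simpa using hφ₀, fun φ hφ => hmax (by simpa using hφ)⟩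

theorem eq_of_forall_norm_eq_one_le [StrictConvexSpace ℝ E]
    (hhom : ∀ (φ : E) (t : ℝ), 0 ≤ t → μ (t • φ) = t * μ φ)
    (hconv : ∀ φ ψ : E, μ φ + μ ψ ≤ μ (φ + ψ)) {φ₀ ψ : E} (hφ₀ : ‖φ₀‖ = 1) (hψ : ‖ψ‖ = 1)
    (hpos : 0 < μ φ₀) (hφ₀max : ∀ φ : E, ‖φ‖ = 1 → μ φ ≤ μ φ₀)
    (hψmax : ∀ φ : E, ‖φ‖ = 1 → μ φ ≤ μ ψ) : ψ = φ₀ := by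
  by_contra hne
  have hsum : ‖ψ + φ₀‖ < 2 := by
    have := norm_add_lt_of_not_sameRay ((not_sameRay_iff_of_norm_eq (hψ.trans hφ₀.symm)).mpr hne)
    rwa [hψ, hφ₀, one_add_one_eq_two] at this
  have hψφ₀ : μ ψ = μ φ₀ := le_antisymm (hφ₀max ψ hψ) (hψmax φ₀ hφ₀)
  have : 2 * μ φ₀ < 2 * μ φ₀ := calc
    2 * μ φ₀ = μ ψ + μ φ₀ := by rw [hψφ₀, two_mul]
    _ ≤ μ (ψ + φ₀) := hconv ψ φ₀
    _ ≤ ‖ψ + φ₀‖ * μ φ₀ := le_norm_mul_of_forall_norm_eq_one_le hhom hφ₀max (ψ + φ₀)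
    _ < 2 * μ φ₀ := mul_lt_mul_of_pos_right hsum hpos
  exact lt_irrefl _ this

end Superadditive

/-- For a positively homogeneous, superadditive function `μ` on a
finite-dimensional real inner product space `E`, if `0 ∉ C_μ` then the supremum of `μ`
over the unit sphere is attained at a unique unit vector `φ₀`. -/
theorem exists_unique_maximizer_of_zero_not_mem_Cmu
    {E : Type*} [NormedAddCommGroup E] [InnerProductSpace ℝ E] [FiniteDimensional ℝ E]
    (μ : E → ℝ)
    (hhom : ∀ (φ : E) (t : ℝ), 0 ≤ t → μ (t • φ) = t * μ φ)
    (hconv : ∀ φ ψ : E, μ φ + μ ψ ≤ μ (φ + ψ))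
    (h0 : (0 : E) ∉ {x : E | ∀ φ : E, μ φ ≤ ⟪φ, x⟫}) :
    ∃! φ₀ : E, ‖φ₀‖ = 1 ∧ ∀ φ : E, ‖φ‖ = 1 → μ φ ≤ μ φ₀ := by
  obtain ⟨φ₁, hφ₁⟩ : ∃ φ₁ : E, 0 < μ φ₁ := by simpa using h0
  have : Nontrivial E := ⟨φ₁, 0, by rintro rfl; simp [map_zero_of_posHomogeneous hhom] at hφ₁⟩
  have hcont : Continuous μ := continuousOn_univ.mp <|
    (concaveOn_univ_of_posHomogeneous_of_superadditive hhom hconv).continuousOn isOpen_univ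
  obtain ⟨φ₀, hφ₀, hmax⟩ := exists_norm_eq_one_forall_le hcont
  have hpos : 0 < μ φ₀ :=
    pos_of_mul_pos_right (hφ₁.trans_le (le_norm_mul_of_forall_norm_eq_one_le hhom hmax φ₁))
      (norm_nonneg φ₁)
  exact ⟨φ₀, ⟨hφ₀, hmax⟩, fun ψ ⟨hψ, hψmax⟩ =>
    eq_of_forall_norm_eq_one_le hhom hconv hφ₀ hψ hpos hmax hψmax⟩
end

section
/- Let E be a finite-dimensional real inner product space and let μ : E → ℝ be positively homogeneous and convex (superadditive), with 0 ∉ C_μ. Let x₀ denote the orthogonal (metric) projection of 0 onto the nonempty closed convex set C_μ, i.e. the unique point of C_μ nearest to 0. Then the unique unit vector φ₀ maximizing μ over the unit sphere is φ₀ = x₀ / ‖x₀‖, and μ(φ₀) = ‖x₀‖ = dist(0, C_μ), the distance from 0 to C_μ. -/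
/-!
The nearest point `x₀` of the convex set `C_μ` to the origin satisfies `‖x₀‖² ≤ ⟪x₀, y⟫` for every
`y ∈ C_μ`. Hahn–Banach, applied to the sublinear function `-μ`, produces `y ∈ C_μ` with
`⟪x₀, y⟫ = μ x₀`; hence `μ x₀ = ‖x₀‖²`. On the unit sphere `μ φ ≤ ⟪φ, x₀⟫ ≤ ‖x₀‖`, so
`x₀ / ‖x₀‖` attains the bound, and equality in Cauchy–Schwarz makes it the only maximizer.
-/

open RealInnerProductSpace

section Superadditive

variable {V : Type*} [AddCommGroup V] [Module ℝ V] {μ : V → ℝ}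

lemma map_smul_le_mul_of_superadditive (hhom : ∀ (φ : V) (t : ℝ), 0 ≤ t → μ (t • φ) = t * μ φ)
    (hconv : ∀ φ ψ : V, μ φ + μ ψ ≤ μ (φ + ψ)) (c : ℝ) (ψ : V) : μ (c • ψ) ≤ c * μ ψ := by
  rcases le_or_gt 0 c with hc | hc
  · exact (hhom ψ c hc).le
  · have hzero : μ 0 = 0 := by simpa using hhom 0 0 le_rfl
    have hneg : μ ψ + μ (-ψ) ≤ 0 := by simpa [hzero] using hconv ψ (-ψ)
    have hcψ : c • ψ = (-c) • -ψ := by rw [neg_smul_neg]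
    rw [hcψ, hhom _ _ (by linarith)]
    nlinarith

lemma exists_linearMap_ge_apply_eq (hhom : ∀ (φ : V) (t : ℝ), 0 ≤ t → μ (t • φ) = t * μ φ)
    (hconv : ∀ φ ψ : V, μ φ + μ ψ ≤ μ (φ + ψ)) {ψ : V} (hψ : ψ ≠ 0) :
    ∃ g : V →ₗ[ℝ] ℝ, (∀ φ, μ φ ≤ g φ) ∧ g ψ = μ ψ := by
  obtain ⟨g, hgψ, hg⟩ := exists_extension_of_le_sublinear
    (LinearPMap.mkSpanSingleton ψ (-μ ψ) hψ) (fun φ => -μ φ)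
    (fun c hc φ => by simp only [hhom φ c hc.le, mul_neg])
    (fun φ φ' => by linarith [hconv φ φ'])
    (by
      rintro ⟨_, hv⟩
      obtain ⟨c, rfl⟩ := Submodule.mem_span_singleton.1 hv
      simp only [LinearPMap.mkSpanSingleton'_apply, smul_eq_mul, mul_neg, neg_le_neg_iff]
      exact map_smul_le_mul_of_superadditive hhom hconv c ψ)
  refine ⟨-g, fun φ => by simpa using neg_le_neg (hg φ), ?_⟩
  have hfψ := hgψ ⟨ψ, Submodule.mem_span_singleton_self ψ⟩
  simp only [LinearPMap.mkSpanSingleton_apply] at hfψ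
  simp [hfψ]

end Superadditive

section InnerProduct

variable {E : Type*} [NormedAddCommGroup E] [InnerProductSpace ℝ E]

/-- The set `C_μ`. -/
def supportSet (μ : E → ℝ) : Set E := {x | ∀ φ, μ φ ≤ ⟪φ, x⟫}

lemma convex_supportSet (μ : E → ℝ) : Convex ℝ (supportSet μ) := by
  simp only [supportSet, Set.ofPred_forall]
  exact convex_iInter fun φ => convex_halfSpace_ge (innerₗ E φ).isLinear _

lemma sq_norm_le_inner_of_isMinOn {K : Set E} (hK : Convex ℝ K) {v w : E} (hv : v ∈ K)
    (hmin : IsMinOn (‖·‖) K v) (hw : w ∈ K) : ‖v‖ ^ 2 ≤ ⟪v, w⟫ := by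
  have : Nonempty K := ⟨⟨v, hv⟩⟩
  have hinf : ‖0 - v‖ = ⨅ u : K, ‖0 - (u : E)‖ := by
    simp only [zero_sub, norm_neg]
    exact le_antisymm (le_ciInf fun u => isMinOn_iff.1 hmin u u.2)
      (ciInf_le ⟨0, Set.forall_mem_range.2 fun _ => norm_nonneg _⟩ (⟨v, hv⟩ : K))
  have := (norm_eq_iInf_iff_real_inner_le_zero hK hv).1 hinf w hw
  rw [zero_sub, inner_neg_left, inner_sub_right, real_inner_self_eq_norm_sq] at this
  linarith


lemma exists_mem_supportSet_inner_eq [FiniteDimensional ℝ E] {μ : E → ℝ}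
    (hhom : ∀ (φ : E) (t : ℝ), 0 ≤ t → μ (t • φ) = t * μ φ)
    (hconv : ∀ φ ψ : E, μ φ + μ ψ ≤ μ (φ + ψ)) {ψ : E} (hψ : ψ ≠ 0) :
    ∃ x ∈ supportSet μ, ⟪ψ, x⟫ = μ ψ := by
  obtain ⟨g, hge, hgψ⟩ := exists_linearMap_ge_apply_eq hhom hconv hψ
  refine ⟨(InnerProductSpace.toDual ℝ E).symm (LinearMap.toContinuousLinearMap g), fun φ => ?_, ?_⟩
  all_goals rw [real_inner_comm, InnerProductSpace.toDual_symm_apply]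
  exacts [hge φ, hgψ]

lemma map_eq_sq_norm_of_isMinOn [FiniteDimensional ℝ E] {μ : E → ℝ}
    (hhom : ∀ (φ : E) (t : ℝ), 0 ≤ t → μ (t • φ) = t * μ φ)
    (hconv : ∀ φ ψ : E, μ φ + μ ψ ≤ μ (φ + ψ)) {x : E} (hx : x ∈ supportSet μ) (hx0 : x ≠ 0)
    (hmin : IsMinOn (‖·‖) (supportSet μ) x) : μ x = ‖x‖ ^ 2 := by
  obtain ⟨y, hy, hxy⟩ := exists_mem_supportSet_inner_eq hhom hconv hx0
  refine le_antisymm ?_ ?_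
  · simpa [real_inner_self_eq_norm_sq] using hx x
  · exact hxy ▸ sq_norm_le_inner_of_isMinOn (convex_supportSet μ) hx hmin hy

lemma le_norm_of_mem_supportSet {μ : E → ℝ} {x φ : E} (hx : x ∈ supportSet μ) (hφ : ‖φ‖ = 1) :
    μ φ ≤ ‖x‖ :=
  calc μ φ ≤ ⟪φ, x⟫ := hx φ
    _ ≤ ‖φ‖ * ‖x‖ := real_inner_le_norm φ x
    _ = ‖x‖ := by rw [hφ, one_mul]

lemma eq_inv_norm_smul_of_norm_le {μ : E → ℝ} {x φ : E} (hx : x ∈ supportSet μ) (hx0 : x ≠ 0)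
    (hφ : ‖φ‖ = 1) (hle : ‖x‖ ≤ μ φ) : φ = ‖x‖⁻¹ • x := by
  have hinner : ⟪φ, x⟫ = ‖φ‖ * ‖x‖ := by
    linarith [hx φ, real_inner_le_norm φ x, hφ ▸ (one_mul ‖x‖).symm]
  have hpar := inner_eq_norm_mul_iff_real.1 hinner
  rw [hφ, one_smul] at hpar
  exact (eq_inv_smul_iff₀ (norm_ne_zero_iff.2 hx0)).2 hpar

end InnerProduct

/-- Suppose `μ` is positively homogeneous and superadditive with `0 ∉ C_μ`,
and let `x₀` be the orthogonal projection of `0` onto `C_μ` (the point of `C_μ` nearest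
to `0`). Then `φ₀ = x₀ / ‖x₀‖` is the unique unit vector maximizing `μ` over the unit
sphere, and `μ φ₀ = ‖x₀‖ = dist(0, C_μ)`. -/
theorem maximizer_eq_normalized_projection
    {E : Type*} [NormedAddCommGroup E] [InnerProductSpace ℝ E] [FiniteDimensional ℝ E]
    (μ : E → ℝ)
    (hhom : ∀ (φ : E) (t : ℝ), 0 ≤ t → μ (t • φ) = t * μ φ)
    (hconv : ∀ φ ψ : E, μ φ + μ ψ ≤ μ (φ + ψ))
    (h0 : (0 : E) ∉ {x : E | ∀ φ : E, μ φ ≤ ⟪φ, x⟫})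
    (x₀ : E) (hx₀ : x₀ ∈ {x : E | ∀ φ : E, μ φ ≤ ⟪φ, x⟫})
    (hnear : ∀ y ∈ {x : E | ∀ φ : E, μ φ ≤ ⟪φ, x⟫}, dist (0 : E) x₀ ≤ dist (0 : E) y) :
    (‖(‖x₀‖⁻¹ • x₀ : E)‖ = 1 ∧ ∀ φ : E, ‖φ‖ = 1 → μ φ ≤ μ (‖x₀‖⁻¹ • x₀)) ∧
      (∀ φ : E, ‖φ‖ = 1 → (∀ ψ : E, ‖ψ‖ = 1 → μ ψ ≤ μ φ) → φ = ‖x₀‖⁻¹ • x₀) ∧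
      μ (‖x₀‖⁻¹ • x₀) = ‖x₀‖ ∧
      ‖x₀‖ = Metric.infDist (0 : E) {x : E | ∀ φ : E, μ φ ≤ ⟪φ, x⟫} := by
  have hx₀0 : x₀ ≠ 0 := fun h => h0 (h ▸ hx₀)
  have hmin : IsMinOn (‖·‖) (supportSet μ) x₀ :=
    isMinOn_iff.2 fun y hy => by simpa only [dist_zero_left] using hnear y hy
  have hnorm : ‖x₀‖ ≠ 0 := norm_ne_zero_iff.2 hx₀0
  have hunit : ‖(‖x₀‖⁻¹ • x₀ : E)‖ = 1 := by
    rw [norm_smul, norm_inv, norm_norm, inv_mul_cancel₀ hnorm]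
  have hval : μ (‖x₀‖⁻¹ • x₀) = ‖x₀‖ := by
    rw [hhom _ _ (by positivity), map_eq_sq_norm_of_isMinOn hhom hconv hx₀ hx₀0 hmin]
    field_simp
  refine ⟨⟨hunit, fun φ hφ => (le_norm_of_mem_supportSet hx₀ hφ).trans_eq hval.symm⟩,
    fun φ hφ hmax => eq_inv_norm_smul_of_norm_le hx₀ hx₀0 hφ (hval ▸ hmax _ hunit), hval, ?_⟩
  rw [← dist_zero_left]
  exact le_antisymm ((Metric.le_infDist ⟨x₀, hx₀⟩).2 hnear) (Metric.infDist_le_dist_of_mem hx₀)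
end
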